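/- Let A be a unital C*-algebra and let s_1, …, s_n, t_1, …, t_n ∈ A be partial isometries such that s_i* s_i = t_i* t_i for every 1 ≤ i ≤ n and ∑_{i=1}^n s_i s_i* = 1 = ∑_{i=1}^n t_i t_i*. Then U := ∑_{i=1}^n s_i t_i* is a unitary in A, with U* = U^{-1} = ∑_{i=1}^n t_i s_i*. -/
import Mathlib

open Finset in
/-- Projections summing to one are pairwise orthogonal. -/
lemma proj_sum_one_ortho
    {A : Type*} [CStarAlgebra A] {n : ℕ} (p : Fin n → A)
    (hproj : ∀ i, p i * p i = p i) (hsa : ∀ i, star (p i) = p i)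
    (hsum : ∑ i, p i = 1) {i j : Fin n} (hij : i ≠ j) :
    p i * p j = 0 := by
  letI := CStarAlgebra.spectralOrder A
  letI := CStarAlgebra.spectralOrderedRing A
  have hpos : ∀ k, (0 : A) ≤ p k := fun k => by
    have h : p k = star (p k) * p k := by rw [hsa, hproj]
    rw [h]; exact star_mul_self_nonneg _
  have hj : j ∈ (univ : Finset (Fin n)).erase i := by simp [hij.symm]
  have h1 : p i + ∑ k ∈ univ.erase i, p k = 1 := by
    rw [Finset.add_sum_erase _ _ (mem_univ i), hsum]
  have h2 : p j + ∑ k ∈ (univ.erase i).erase j, p k = ∑ k ∈ univ.erase i, p k :=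
    Finset.add_sum_erase _ _ hj
  have hr : (0 : A) ≤ ∑ k ∈ (univ.erase i).erase j, p k :=
    Finset.sum_nonneg fun k _ => hpos k
  have hr' : ∑ k ∈ (univ.erase i).erase j, p k = 1 - p i - p j := by
    rw [← h1, ← h2]; abel
  have hconj : (0 : A) ≤ p j * (1 - p i - p j) * p j := by
    have := star_left_conjugate_nonneg (hr'.symm ▸ hr) (p j)
    rwa [hsa] at this
  have hval : p j * (1 - p i - p j) * p j = - (p j * p i * p j) := by
    have hx : p j * (1 - p i - p j) * p j
        = p j * p j - p j * p i * p j - p j * p j * p j := by noncomm_ring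
    rw [hx, hproj j, hproj j]; abel
  have hle : p j * p i * p j ≤ 0 := by
    rw [hval] at hconj
    exact neg_nonneg.mp hconj
  have hge : (0 : A) ≤ p j * p i * p j := by
    have h : p j * p i * p j = star (p i * p j) * (p i * p j) := by
      rw [star_mul, hsa, hsa, ← mul_assoc, mul_assoc (p j) (p i) (p i), hproj]
    rw [h]; exact star_mul_self_nonneg _
  have hz : star (p i * p j) * (p i * p j) = 0 := by
    have h0 : p j * p i * p j = 0 := le_antisymm hle hge
    rw [star_mul, hsa, hsa, ← mul_assoc, mul_assoc (p j) (p i) (p i), hproj, h0]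
  exact (CStarRing.star_mul_self_eq_zero_iff _).mp hz

open Finset in
lemma pi_ortho
    {A : Type*} [CStarAlgebra A] {n : ℕ} (s : Fin n → A)
    (hpis : ∀ i, s i * star (s i) * s i = s i)
    (hs : ∑ i, s i * star (s i) = 1) {i j : Fin n} (hij : i ≠ j) :
    star (s i) * s j = 0 := by
  have hortho : (s i * star (s i)) * (s j * star (s j)) = 0 :=
    proj_sum_one_ortho (fun k => s k * star (s k))
      (fun k => by
        show s k * star (s k) * (s k * star (s k)) = s k * star (s k)
        rw [show s k * star (s k) * (s k * star (s k))
            = (s k * star (s k) * s k) * star (s k) by noncomm_ring, hpis])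
      (fun k => by simp [star_mul, mul_assoc]) hs hij
  have hstar : star (s i) * s i * star (s i) = star (s i) := by
    have := congrArg star (hpis i); simpa [star_mul, mul_assoc] using this
  calc star (s i) * s j
      = (star (s i) * s i * star (s i)) * (s j * star (s j) * s j) := by
        rw [hstar, hpis]
    _ = star (s i) * ((s i * star (s i)) * (s j * star (s j))) * s j := by
        noncomm_ring
    _ = 0 := by rw [hortho]; simp

open Finset in
lemma sum_prod_eq_one
    {A : Type*} [CStarAlgebra A] {n : ℕ} (s t : Fin n → A)
    (hpis : ∀ i, s i * star (s i) * s i = s i)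
    (hpit : ∀ i, t i * star (t i) * t i = t i)
    (hsrc : ∀ i, star (s i) * s i = star (t i) * t i)
    (hs : ∑ i, s i * star (s i) = 1)
    (ht : ∑ i, t i * star (t i) = 1) :
    (∑ i, s i * star (t i)) * (∑ i, t i * star (s i)) = 1 := by
  rw [Finset.sum_mul_sum]
  have hterm : ∀ i ∈ (univ : Finset (Fin n)),
      ∑ j, (s i * star (t i)) * (t j * star (s j)) = s i * star (s i) := by
    intro i _
    rw [Finset.sum_eq_single i]
    · rw [show (s i * star (t i)) * (t i * star (s i))
          = s i * (star (t i) * t i) * star (s i) by noncomm_ring,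
        ← hsrc, show s i * (star (s i) * s i) * star (s i)
          = (s i * star (s i) * s i) * star (s i) by noncomm_ring, hpis]
    · intro j _ hj
      rw [show (s i * star (t i)) * (t j * star (s j))
          = s i * (star (t i) * t j) * star (s j) by noncomm_ring,
        pi_ortho t hpit ht (fun h => hj h.symm)]
      simp
    · simp
  rw [Finset.sum_congr rfl hterm, hs]

/-- If `s₁, …, sₙ, t₁, …, tₙ` are partial isometries in a unital C*-algebra
with matching source projections `sᵢ* sᵢ = tᵢ* tᵢ` and complete range projections
`∑ sᵢ sᵢ* = 1 = ∑ tᵢ tᵢ*`, then `U = ∑ sᵢ tᵢ*` is a unitary whose adjoint (= inverse)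
is `∑ tᵢ sᵢ*`. -/
theorem sum_mul_star_unitary
    {A : Type*} [CStarAlgebra A] {n : ℕ} (s t : Fin n → A)
    (hpis : ∀ i, s i * star (s i) * s i = s i)
    (hpit : ∀ i, t i * star (t i) * t i = t i)
    (hsrc : ∀ i, star (s i) * s i = star (t i) * t i)
    (hs : ∑ i, s i * star (s i) = 1)
    (ht : ∑ i, t i * star (t i) = 1) :
    (∑ i, s i * star (t i)) ∈ unitary A ∧
      star (∑ i, s i * star (t i)) = ∑ i, t i * star (s i) ∧
      (∑ i, s i * star (t i)) * (∑ i, t i * star (s i)) = 1 ∧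
      (∑ i, t i * star (s i)) * (∑ i, s i * star (t i)) = 1 := by
  have hstar : star (∑ i, s i * star (t i)) = ∑ i, t i * star (s i) := by
    rw [star_sum]; exact Finset.sum_congr rfl fun i _ => by simp [star_mul]
  have h1 : (∑ i, s i * star (t i)) * (∑ i, t i * star (s i)) = 1 :=
    sum_prod_eq_one s t hpis hpit hsrc hs ht
  have h2 : (∑ i, t i * star (s i)) * (∑ i, s i * star (t i)) = 1 :=
    sum_prod_eq_one t s hpit hpis (fun i => (hsrc i).symm) ht hs
  refine ⟨⟨?_, ?_⟩, hstar, h1, h2⟩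
  · rw [hstar]; exact h2
  · rw [hstar]; exact h1
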